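/- arXiv:1608.02550 — 3 statements merged into one kernel-verified Lean document; each statement's English description precedes it below -/
import Mathlib

section
/- Let W : [0,∞) → ℝ be differentiable, positive on (0,∞), strictly increasing, and log-concave on (0,∞). Then for all 0 ≤ b₋ < b₊, we have W(b₊)·(W(b₊) − W(b₋)) ≥ W'(b₊)·∫_{b₋}^{b₊} W(z) dz. -/
open Set intervalIntegral

theorem logconcave_integral_inequality
    (W : ℝ → ℝ)
    (hcont : ContinuousOn W (Ici 0))
    (hdiff : ∀ x ∈ Ioi (0 : ℝ), DifferentiableAt ℝ W x)
    (hpos : ∀ x ∈ Ioi (0 : ℝ), 0 < W x)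
    (hmono : StrictMonoOn W (Ici 0))
    (hlogconc : ∀ η ς : ℝ, 0 < η → η ≤ ς → deriv W ς / W ς ≤ deriv W η / W η)
    (bm bp : ℝ) (hbm : 0 ≤ bm) (hb : bm < bp) :
    deriv W bp * ∫ z in bm..bp, W z ≤ W bp * (W bp - W bm) := by
  have hbp : (0 : ℝ) < bp := lt_of_le_of_lt hbm hb
  have hWbp : 0 < W bp := hpos bp hbp
  set c : ℝ := deriv W bp / W bp with hc
  have hIccsub : Icc bm bp ⊆ Ici (0 : ℝ) := fun x hx => le_trans hbm hx.1
  have huIcc : uIcc bm bp = Icc bm bp := uIcc_of_le hb.le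
  have hWcontI : ContinuousOn W (Icc bm bp) := hcont.mono hIccsub
  have hWint : IntervalIntegrable W MeasureTheory.volume bm bp := by
    apply ContinuousOn.intervalIntegrable
    rwa [huIcc]
  -- the auxiliary function
  set F : ℝ → ℝ := fun t => W t - c * ∫ z in bm..t, W z with hF
  have hFcont : ContinuousOn F (Icc bm bp) := by
    apply hWcontI.sub
    apply ContinuousOn.mul continuousOn_const
    have := intervalIntegral.continuousOn_primitive_interval' hWint left_mem_uIcc
    rwa [huIcc] at this
  have hFderiv : ∀ x ∈ Ioo bm bp, HasDerivAt F (deriv W x - c * W x) x := by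
    intro x hx
    have hx0 : (0 : ℝ) < x := lt_of_le_of_lt hbm hx.1
    have hWx : DifferentiableAt ℝ W x := hdiff x hx0
    have hWcx : ContinuousAt W x := hcont.continuousAt (Ici_mem_nhds hx0)
    have hint : IntervalIntegrable W MeasureTheory.volume bm x := by
      apply ContinuousOn.intervalIntegrable
      apply hcont.mono
      rw [uIcc_of_le hx.1.le]
      exact fun y hy => le_trans hbm hy.1
    have hprim : HasDerivAt (fun u => ∫ z in bm..u, W z) (W x) x :=
      intervalIntegral.integral_hasDerivAt_right hint
        (ContinuousOn.stronglyMeasurableAtFilter isOpen_Ioi (hcont.mono Ioi_subset_Ici_self) x hx0)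
        hWcx
    exact (hWx.hasDerivAt).sub ((hprim.const_mul c))
  have hmonoF : MonotoneOn F (Icc bm bp) := by
    apply monotoneOn_of_deriv_nonneg (convex_Icc bm bp) hFcont
    · intro x hx
      rw [interior_Icc] at hx
      exact ((hFderiv x hx).differentiableAt).differentiableWithinAt
    · intro x hx
      rw [interior_Icc] at hx
      rw [(hFderiv x hx).deriv]
      have hx0 : (0 : ℝ) < x := lt_of_le_of_lt hbm hx.1
      have hWx : 0 < W x := hpos x hx0
      have := hlogconc x bp hx0 hx.2.le
      rw [sub_nonneg, hc]
      calc deriv W bp / W bp * W x ≤ deriv W x / W x * W x :=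
            mul_le_mul_of_nonneg_right this hWx.le
        _ = deriv W x := div_mul_cancel₀ _ hWx.ne'
  have key : F bm ≤ F bp :=
    hmonoF (left_mem_Icc.2 hb.le) (right_mem_Icc.2 hb.le) hb.le
  simp only [hF, intervalIntegral.integral_same, mul_zero, sub_zero] at key
  -- key : W bm ≤ W bp - c * ∫ z in bm..bp, W z
  have h2 : c * ∫ z in bm..bp, W z ≤ W bp - W bm := by linarith
  have h3 := mul_le_mul_of_nonneg_left h2 hWbp.le
  calc deriv W bp * ∫ z in bm..bp, W z
      = W bp * (c * ∫ z in bm..bp, W z) := by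
        rw [hc]; field_simp
    _ ≤ W bp * (W bp - W bm) := h3
end

section
/- Let W : [0,∞) → ℝ be continuous, differentiable on (0,∞), strictly increasing, strictly positive on (0,∞), and log-concave on (0,∞). Fix q > 0, b₋ ≥ 0, and x ≥ 0. Define Z(x) = 1 + q∫₀ˣ W(z)dz and Ψ_x(b₋,b₊) = Z(x) − W(x)·q∫_{b₋}^{b₊} W(z)dz/(W(b₊) − W(b₋)) for b₊ > max(b₋, x). Then b₊ ↦ Ψ_x(b₋,b₊) is non-increasing in b₊ on (max(b₋,x), ∞). -/
open Set intervalIntegral MeasureTheory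

/-- Key lemma: from log-concavity, `W'(t) ∫_{bm}^t W ≤ W(t) (W(t) - W(bm))`. -/
lemma key_logconc_ineq
    (W : ℝ → ℝ)
    (hcont : ContinuousOn W (Ici 0))
    (hdiff : ∀ x ∈ Ioi (0 : ℝ), DifferentiableAt ℝ W x)
    (hpos : ∀ x ∈ Ioi (0 : ℝ), 0 < W x)
    (hlogconc : ∀ η ς : ℝ, 0 < η → η ≤ ς → deriv W ς / W ς ≤ deriv W η / W η)
    (bm t : ℝ) (hbm : 0 ≤ bm) (hbt : bm < t) :
    deriv W t * ∫ z in bm..t, W z ≤ W t * (W t - W bm) := by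
  have hWint : ∀ c d : ℝ, 0 ≤ c → 0 ≤ d → IntervalIntegrable W volume c d := by
    intro c d hc hd
    exact (hcont.mono (fun z hz => le_trans (le_min hc hd) hz.1)).intervalIntegrable
  set H : ℝ → ℝ := fun s => W t * W s - deriv W t * ∫ z in bm..s, W z with hH
  have hmonoH : MonotoneOn H (Icc bm t) := by
    apply monotoneOn_of_deriv_nonneg (convex_Icc bm t)
    · apply ContinuousOn.sub
      · exact (continuousOn_const.mul (hcont.mono (fun z hz => le_trans hbm hz.1)))
      · apply ContinuousOn.mul continuousOn_const
        have h1 : ContinuousOn (fun s => ∫ z in bm..s, W z) (uIcc bm t) :=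
          continuousOn_primitive_interval' (hWint bm t hbm (le_trans hbm hbt.le))
            left_mem_uIcc
        exact h1.mono (by rw [uIcc_of_le hbt.le])
    · intro s hs
      rw [interior_Icc] at hs
      have hs0 : 0 < s := lt_of_le_of_lt hbm hs.1
      have hd1 : HasDerivAt W (deriv W s) s := (hdiff s hs0).hasDerivAt
      have hd2 : HasDerivAt (fun u => ∫ z in bm..u, W z) (W s) s := by
        refine integral_hasDerivAt_right (hWint bm s hbm hs0.le) ?_ (hdiff s hs0).continuousAt
        exact ContinuousAt.stronglyMeasurableAtFilter isOpen_Ioi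
          (fun y hy => (hdiff y hy).continuousAt) s hs0
      exact ((hd1.const_mul (W t)).sub (hd2.const_mul (deriv W t))).differentiableAt.differentiableWithinAt
    · intro s hs
      rw [interior_Icc] at hs
      have hs0 : 0 < s := lt_of_le_of_lt hbm hs.1
      have hd1 : HasDerivAt W (deriv W s) s := (hdiff s hs0).hasDerivAt
      have hd2 : HasDerivAt (fun u => ∫ z in bm..u, W z) (W s) s := by
        refine integral_hasDerivAt_right (hWint bm s hbm hs0.le) ?_ (hdiff s hs0).continuousAt
        exact ContinuousAt.stronglyMeasurableAtFilter isOpen_Ioi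
          (fun y hy => (hdiff y hy).continuousAt) s hs0
      have hH' : HasDerivAt H (W t * deriv W s - deriv W t * W s) s :=
        (hd1.const_mul (W t)).sub (hd2.const_mul (deriv W t))
      rw [hH'.deriv]
      have hlc := hlogconc s t hs0 hs.2.le
      have hWs : 0 < W s := hpos s hs0
      have hWt : 0 < W t := hpos t (lt_of_le_of_lt hbm hbt)
      rw [div_le_div_iff₀ hWt hWs] at hlc
      linarith
  have h := hmonoH (left_mem_Icc.mpr hbt.le) (right_mem_Icc.mpr hbt.le) hbt.le
  simp only [hH, intervalIntegral.integral_same, mul_zero, sub_zero] at h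
  nlinarith [h]

theorem Psi_antitone_in_upper_band
    (W : ℝ → ℝ)
    (hcont : ContinuousOn W (Ici 0))
    (hdiff : ∀ x ∈ Ioi (0 : ℝ), DifferentiableAt ℝ W x)
    (hpos : ∀ x ∈ Ioi (0 : ℝ), 0 < W x)
    (hmono : StrictMonoOn W (Ici 0))
    (hlogconc : ∀ η ς : ℝ, 0 < η → η ≤ ς → deriv W ς / W ς ≤ deriv W η / W η)
    (q bm x : ℝ) (hq : 0 < q) (hbm : 0 ≤ bm) (hx : 0 ≤ x) :
    AntitoneOn
      (fun bp => (1 + q * ∫ z in (0:ℝ)..x, W z) -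
        W x * (q * ∫ z in bm..bp, W z) / (W bp - W bm))
      (Ioi (max bm x)) := by
  have hWint : ∀ c d : ℝ, 0 ≤ c → 0 ≤ d → IntervalIntegrable W volume c d := by
    intro c d hc hd
    exact (hcont.mono (fun z hz => le_trans (le_min hc hd) hz.1)).intervalIntegrable
  -- W is nonneg on [0, ∞)
  have hW0 : 0 ≤ W 0 := by
    have ht : Filter.Tendsto W (nhdsWithin 0 (Ioi 0)) (nhds (W 0)) :=
      ((hcont 0 Set.self_mem_Ici).mono Ioi_subset_Ici_self : ContinuousWithinAt W (Ioi 0) 0)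
    refine ge_of_tendsto ht ?_
    exact eventually_nhdsWithin_of_forall (fun z hz => (hpos z hz).le)
  have hWnn : ∀ z : ℝ, 0 ≤ z → 0 ≤ W z := by
    intro z hz
    rcases eq_or_lt_of_le hz with h | h
    · exact h ▸ hW0
    · exact (hpos z h).le
  intro a ha b hb hab
  simp only [mem_Ioi] at ha hb
  have hbma : bm < a := lt_of_le_of_lt (le_max_left _ _) ha
  have hxa : x < a := lt_of_le_of_lt (le_max_right _ _) ha
  have ha0 : 0 < a := lt_of_le_of_lt hbm hbma
  have hb0 : 0 < b := lt_of_lt_of_le ha0 hab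
  have hbmb : bm < b := lt_of_lt_of_le hbma hab
  have hWa : 0 < W a := hpos a ha0
  have hWb : 0 < W b := hpos b hb0
  have hDa : 0 < W a - W bm := sub_pos.mpr (hmono hbm ha0.le hbma)
  have hDb : 0 < W b - W bm := sub_pos.mpr (hmono hbm hb0.le hbmb)
  set Ia : ℝ := ∫ z in bm..a, W z with hIa
  set Ib : ℝ := ∫ z in bm..b, W z with hIb
  have hIa0 : 0 ≤ Ia :=
    intervalIntegral.integral_nonneg hbma.le (fun u hu => hWnn u (le_trans hbm hu.1))
  -- key inequality at a
  have hkey : deriv W a * Ia ≤ W a * (W a - W bm) :=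
    key_logconc_ineq W hcont hdiff hpos hlogconc bm a hbm hbma
  -- core monotonicity: Ia * (W b - W bm) ≤ Ib * (W a - W bm)
  have hcore : Ia * (W b - W bm) ≤ Ib * (W a - W bm) := by
    set G : ℝ → ℝ := fun s => ((W a - W bm) * ∫ z in bm..s, W z) - Ia * W s with hG
    have hmonoG : MonotoneOn G (Icc a b) := by
      rw [hG]
      apply monotoneOn_of_deriv_nonneg (convex_Icc a b)
      · apply ContinuousOn.sub
        · apply ContinuousOn.mul continuousOn_const
          have h1 : ContinuousOn (fun s => ∫ z in bm..s, W z) (uIcc bm b) :=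
            continuousOn_primitive_interval' (hWint bm b hbm hb0.le) left_mem_uIcc
          refine h1.mono ?_
          rw [uIcc_of_le hbmb.le]
          exact Icc_subset_Icc hbma.le le_rfl
        · exact continuousOn_const.mul (hcont.mono (fun z hz => le_trans ha0.le hz.1))
      · intro s hs
        rw [interior_Icc] at hs
        have hs0 : 0 < s := lt_trans ha0 hs.1
        have hd1 : HasDerivAt W (deriv W s) s := (hdiff s hs0).hasDerivAt
        have hd2 : HasDerivAt (fun u => ∫ z in bm..u, W z) (W s) s := by
          refine integral_hasDerivAt_right (hWint bm s hbm hs0.le) ?_ (hdiff s hs0).continuousAt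
          exact ContinuousAt.stronglyMeasurableAtFilter isOpen_Ioi
            (fun y hy => (hdiff y hy).continuousAt) s hs0
        exact ((hd2.const_mul (W a - W bm)).sub (hd1.const_mul Ia)).differentiableAt.differentiableWithinAt
      · intro s hs
        rw [interior_Icc] at hs
        have hs0 : 0 < s := lt_trans ha0 hs.1
        have hd1 : HasDerivAt W (deriv W s) s := (hdiff s hs0).hasDerivAt
        have hd2 : HasDerivAt (fun u => ∫ z in bm..u, W z) (W s) s := by
          refine integral_hasDerivAt_right (hWint bm s hbm hs0.le) ?_ (hdiff s hs0).continuousAt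
          exact ContinuousAt.stronglyMeasurableAtFilter isOpen_Ioi
            (fun y hy => (hdiff y hy).continuousAt) s hs0
        have hG' : HasDerivAt G ((W a - W bm) * W s - Ia * deriv W s) s :=
          (hd2.const_mul (W a - W bm)).sub (hd1.const_mul Ia)
        rw [hG'.deriv]
        have hWs : 0 < W s := hpos s hs0
        have hlc := hlogconc a s ha0 hs.1.le
        rw [div_le_div_iff₀ hWs hWa] at hlc
        -- hlc : deriv W s * W a ≤ deriv W a * W s
        nlinarith [mul_le_mul_of_nonneg_left hlc hIa0,
          mul_le_mul_of_nonneg_right hkey hWs.le]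
    have h := hmonoG (left_mem_Icc.mpr hab) (right_mem_Icc.mpr hab) hab
    simp only [hG] at h
    rw [← hIa, ← hIb] at h
    nlinarith [h]
  have hWx : 0 ≤ W x := hWnn x hx
  simp only
  have hfrac : W x * (q * Ia) / (W a - W bm) ≤ W x * (q * Ib) / (W b - W bm) := by
    rw [div_le_div_iff₀ hDa hDb]
    nlinarith [mul_le_mul_of_nonneg_left hcore (mul_nonneg hWx hq.le)]
  linarith [hfrac]
end

section
/- Let g, ζ : (0,∞) → ℝ be differentiable with g'(ς) = h(ς)(ζ(ς) − g(ς)) for some positive continuous h, and suppose b₊ is the unique maximizer of g with ζ(b₊) = g(b₊). If moreover ζ(ς) > g(ς) for ς < b₊ and ζ(ς) < g(ς) for ς > b₊, and ζ is strictly increasing on (0,b*) and strictly decreasing on (b*,∞) with ζ(b*) its maximum, then b₊ > b* or b₊ = b* with ζ(b*) = g(b*) ≤ max ζ; in particular b₊ ≥ b*. -/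
open Set

theorem crossing_point_past_peak
    (g ζ h : ℝ → ℝ) (bstar bp : ℝ) (hbstar : 0 < bstar) (hbp : 0 < bp)
    (hh : ∀ ς ∈ Ioi (0 : ℝ), 0 < h ς) (hhcont : ContinuousOn h (Ioi 0))
    (hg' : ∀ ς ∈ Ioi (0 : ℝ), HasDerivAt g (h ς * (ζ ς - g ς)) ς)
    (hζdiff : ∀ ς ∈ Ioi (0 : ℝ), DifferentiableAt ℝ ζ ς)
    (hmax : ∀ ς ∈ Ioi (0 : ℝ), ς ≠ bp → g ς < g bp)
    (heq : ζ bp = g bp)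
    (hbefore : ∀ ς ∈ Ioi (0 : ℝ), ς < bp → g ς < ζ ς)
    (hafter : ∀ ς ∈ Ioi (0 : ℝ), bp < ς → ζ ς < g ς)
    (hinc : StrictMonoOn ζ (Ioc 0 bstar))
    (hdec : StrictAntiOn ζ (Ici bstar)) :
    bstar ≤ bp := by
  by_contra hlt
  push_neg at hlt
  have h1 : ζ bp < ζ bstar := hinc ⟨hbp, le_of_lt hlt⟩ ⟨hbstar, le_refl _⟩ hlt
  have h2 : ζ bstar < g bstar := hafter bstar hbstar hlt
  have h3 : g bstar < g bp := hmax bstar hbstar (ne_of_gt hlt)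
  linarith [heq]
end
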